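/- Let d ≥ 1, x₀ ∈ E = EuclideanSpace ℝ (Fin d), r > 0, and let A : E → ℝ be continuously differentiable and φ : E → ℝ twice continuously differentiable on B = closedBall(x₀, r). Set C₁ := sup_B ‖∇A‖ and C₃ := sup_B ‖∇²φ‖ (operator norm). Then for every ω > 0, every unit vector ŝ ∈ E, and x = x₀ + r ŝ, |A(x)·exp(i ω φ(x)) − A(x₀)·exp(i ω (φ(x₀) + r⟨∇φ(x₀), ŝ⟩))| ≤ r C₁ + (ω r²/2)·|A(x₀)|·C₃. -/

import Mathlib

/-!
Split `A(x)e^{iωφ(x)} − A(x₀)e^{iωψ}` as `(A(x) − A(x₀))e^{iωφ(x)} + A(x₀)(e^{iωφ(x)} − e^{iωψ})`.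
The first term is bounded by the mean value inequality for `A`; in the second, `t ↦ e^{it}` is
1-Lipschitz, and `ψ = φ(x₀) + r⟨∇φ(x₀), ŝ⟩` is the first-order Taylor polynomial of `φ` at
`x = x₀ + rŝ`, whose error is at most `C₃r²/2`.
-/

open Complex Metric Set
open scoped InnerProductSpace

section Taylor

variable {E F : Type*} [NormedAddCommGroup E] [NormedSpace ℝ E]
  [NormedAddCommGroup F] [NormedSpace ℝ F]

theorem norm_image_sub_le_of_norm_deriv_right_le_mul {f f' : ℝ → F} {a b K : ℝ}
    (hf : ContinuousOn f (Icc a b))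
    (hf' : ∀ t ∈ Ico a b, HasDerivWithinAt f (f' t) (Ici t) t)
    (bound : ∀ t ∈ Ico a b, ‖f' t‖ ≤ K * (t - a)) :
    ∀ t ∈ Icc a b, ‖f t - f a‖ ≤ K / 2 * (t - a) ^ 2 := by
  have hB : ∀ t, HasDerivAt (fun t => K / 2 * (t - a) ^ 2) (K * (t - a)) t := fun t =>
    ((((hasDerivAt_id t).sub_const a).pow 2).const_mul (K / 2)).congr_deriv (by simp; ring)
  exact image_norm_le_of_norm_deriv_right_le_deriv_boundary (hf.sub continuousOn_const)
    (fun t ht => (hf' t ht).sub_const (f a)) (by simp) hB bound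

theorem Convex.norm_sub_sub_fderivWithin_le {s : Set E} {f : E → F} {C : ℝ} {x y : E}
    (hs : Convex ℝ s) (hf : DifferentiableOn ℝ f s)
    (hf' : DifferentiableOn ℝ (fderivWithin ℝ f s) s)
    (hC : ∀ z ∈ s, ‖fderivWithin ℝ (fderivWithin ℝ f s) s z‖ ≤ C) (hx : x ∈ s) (hy : y ∈ s) :
    ‖f y - f x - fderivWithin ℝ f s x (y - x)‖ ≤ C / 2 * ‖y - x‖ ^ 2 := by
  set v := y - x
  set f' := fderivWithin ℝ f s
  have hseg : ∀ t ∈ Icc (0 : ℝ) 1, x + t • v ∈ s := fun t ht => hs.add_smul_sub_mem hx hy ht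
  have hderiv : ∀ t ∈ Icc (0 : ℝ) 1, HasDerivWithinAt (fun t : ℝ => f (x + t • v) - t • f' x v)
      (f' (x + t • v) v - f' x v) (Icc 0 1) t := by
    intro t ht
    have hline : HasDerivWithinAt (fun t : ℝ => x + t • v) v (Icc 0 1) t := by
      simpa using (((hasDerivAt_id t).smul_const v).const_add x).hasDerivWithinAt
    refine ((hf _ (hseg t ht)).hasFDerivWithinAt.comp_hasDerivWithinAt t hline hseg).sub ?_
    simpa using ((hasDerivAt_id t).smul_const (f' x v)).hasDerivWithinAt
  have hbound : ∀ t ∈ Ico (0 : ℝ) 1, ‖f' (x + t • v) v - f' x v‖ ≤ C * ‖v‖ ^ 2 * (t - 0) := by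
    intro t ht
    have hmvt : ‖f' (x + t • v) - f' x‖ ≤ C * (t * ‖v‖) := by
      simpa [norm_smul, abs_of_nonneg ht.1] using
        hs.norm_image_sub_le_of_norm_fderivWithin_le hf' hC hx (hseg t (Ico_subset_Icc_self ht))
    calc ‖f' (x + t • v) v - f' x v‖ ≤ ‖f' (x + t • v) - f' x‖ * ‖v‖ :=
          (f' (x + t • v) - f' x).le_opNorm v
      _ ≤ C * (t * ‖v‖) * ‖v‖ := by gcongr
      _ = C * ‖v‖ ^ 2 * (t - 0) := by ring
  have key := norm_image_sub_le_of_norm_deriv_right_le_mul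
    (fun t ht => (hderiv t ht).continuousWithinAt)
    (fun t ht => (hderiv t (Ico_subset_Icc_self ht)).mono_of_mem_nhdsWithin
      (Icc_mem_nhdsGE_of_mem ht)) hbound 1 (right_mem_Icc.2 zero_le_one)
  simp only [one_smul, zero_smul, add_zero, sub_zero, one_pow, mul_one, v, add_sub_cancel] at key
  rw [sub_right_comm]
  linarith

end Taylor

theorem Complex.norm_exp_I_mul_ofReal_sub_exp_I_mul_ofReal_le (a b : ℝ) :
    ‖exp (I * a) - exp (I * b)‖ ≤ |a - b| := by
  have h : exp (I * a) - exp (I * b) = exp (I * b) * (exp (I * ↑(a - b)) - 1) := by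
    rw [mul_sub, ← Complex.exp_add, ofReal_sub]
    ring_nf
  rw [h, norm_mul, norm_exp_I_mul_ofReal, one_mul]
  exact Real.norm_exp_I_mul_ofReal_sub_one_le

theorem Complex.norm_ofReal_mul_exp_I_sub_ofReal_mul_exp_I_le (a b θ ψ : ℝ) :
    ‖(a : ℂ) * exp (I * θ) - b * exp (I * ψ)‖ ≤ |a - b| + |b| * |θ - ψ| := by
  have h : (a : ℂ) * exp (I * θ) - b * exp (I * ψ)
      = ↑(a - b) * exp (I * θ) + b * (exp (I * θ) - exp (I * ψ)) := by
    push_cast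
    ring
  rw [h]
  refine (norm_add_le _ _).trans (add_le_add ?_ ?_)
  · rw [norm_mul, norm_exp_I_mul_ofReal, mul_one, norm_real, Real.norm_eq_abs]
  · rw [norm_mul, norm_real, Real.norm_eq_abs]
    exact mul_le_mul_of_nonneg_left (norm_exp_I_mul_ofReal_sub_exp_I_mul_ofReal_le θ ψ)
      (abs_nonneg b)

theorem stmt_13_general {d : ℕ}
    (x₀ : EuclideanSpace ℝ (Fin d)) (r : ℝ) (hr : 0 < r)
    (A φ : EuclideanSpace ℝ (Fin d) → ℝ)
    (hA : ContDiffOn ℝ 1 A (closedBall x₀ r))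
    (hφ : ContDiffOn ℝ 2 φ (closedBall x₀ r))
    (C₁ C₃ : ℝ)
    (hC₁ : ∀ y ∈ closedBall x₀ r, ‖fderivWithin ℝ A (closedBall x₀ r) y‖ ≤ C₁)
    (hC₃ : ∀ y ∈ closedBall x₀ r,
      ‖fderivWithin ℝ (fun z => fderivWithin ℝ φ (closedBall x₀ r) z)
          (closedBall x₀ r) y‖ ≤ C₃) :
    ∀ ω : ℝ, 0 < ω → ∀ s : EuclideanSpace ℝ (Fin d), ‖s‖ = 1 →
      ‖(A (x₀ + r • s) : ℂ)
            * Complex.exp (Complex.I * (ω : ℂ) * (φ (x₀ + r • s) : ℂ))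
          - (A x₀ : ℂ)
            * Complex.exp (Complex.I * (ω : ℂ)
                * ((φ x₀ + r * ⟪gradient φ x₀, s⟫_ℝ : ℝ) : ℂ))‖
        ≤ r * C₁ + ω * r ^ 2 / 2 * |A x₀| * C₃ := by
  intro ω hω s hs
  set B := closedBall x₀ r
  set x := x₀ + r • s
  have hconv : Convex ℝ B := convex_closedBall x₀ r
  have hx₀ : x₀ ∈ B := mem_closedBall_self hr.le
  have hdist : ‖x - x₀‖ = r := by simp [x, norm_smul, hs, abs_of_pos hr]
  have hx : x ∈ B := by rw [mem_closedBall, dist_eq_norm, hdist]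
  have hB : UniqueDiffOn ℝ B := uniqueDiffOn_convex hconv (by rw [interior_closedBall x₀ hr.ne']; exact nonempty_ball.2 hr)
  have hAx : |A x - A x₀| ≤ C₁ * r := by
    simpa [hdist] using
      hconv.norm_image_sub_le_of_norm_fderivWithin_le (hA.differentiableOn one_ne_zero) hC₁ hx₀ hx
  have hlin : fderivWithin ℝ φ B x₀ (x - x₀) = r * ⟪gradient φ x₀, s⟫_ℝ := by
    rw [fderivWithin_of_mem_nhds (closedBall_mem_nhds x₀ hr)]
    simp [x, inner_gradient_left]
  have hφx : |φ x - (φ x₀ + r * ⟪gradient φ x₀, s⟫_ℝ)| ≤ C₃ / 2 * r ^ 2 := by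
    have := hconv.norm_sub_sub_fderivWithin_le (hφ.differentiableOn two_ne_zero)
      ((hφ.fderivWithin hB le_rfl).differentiableOn one_ne_zero) hC₃ hx₀ hx
    rwa [hlin, hdist, Real.norm_eq_abs, sub_sub] at this
  calc _ ≤ |A x - A x₀| + |A x₀| * |ω * φ x - ω * (φ x₀ + r * ⟪gradient φ x₀, s⟫_ℝ)| := by
        simpa only [mul_assoc, ofReal_mul] using
          norm_ofReal_mul_exp_I_sub_ofReal_mul_exp_I_le (A x) (A x₀) (ω * φ x)
            (ω * (φ x₀ + r * ⟪gradient φ x₀, s⟫_ℝ))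
    _ ≤ C₁ * r + |A x₀| * (ω * (C₃ / 2 * r ^ 2)) := by
        rw [← mul_sub, abs_mul, abs_of_pos hω]
        gcongr
    _ = r * C₁ + ω * r ^ 2 / 2 * |A x₀| * C₃ := by ring

/-- Perturbation of a smooth curved wave front `u = A e^{iωφ}` from its local plane-wave
approximation `u₀(x) = A(x₀)e^{iω(φ(x₀) + ⟨∇φ(x₀), x − x₀⟩)}`, sampled on the circle of
radius `r` around `x₀`: for every unit vector `ŝ` and `x = x₀ + rŝ`,
`|u(x) − u₀(x)| ≤ rC₁ + (ωr²/2)|A(x₀)|C₃` where `C₁ = sup_B ‖∇A‖`, `C₃ = sup_B ‖∇²φ‖`. -/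
theorem stmt_13 {d : ℕ} (hd : 1 ≤ d)
    (x₀ : EuclideanSpace ℝ (Fin d)) (r : ℝ) (hr : 0 < r)
    (A φ : EuclideanSpace ℝ (Fin d) → ℝ)
    (hA : ContDiffOn ℝ 1 A (closedBall x₀ r))
    (hφ : ContDiffOn ℝ 2 φ (closedBall x₀ r))
    (C₁ C₃ : ℝ)
    (hC₁ : ∀ y ∈ closedBall x₀ r, ‖fderivWithin ℝ A (closedBall x₀ r) y‖ ≤ C₁)
    (hC₃ : ∀ y ∈ closedBall x₀ r,
      ‖fderivWithin ℝ (fun z => fderivWithin ℝ φ (closedBall x₀ r) z)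
          (closedBall x₀ r) y‖ ≤ C₃) :
    ∀ ω : ℝ, 0 < ω → ∀ s : EuclideanSpace ℝ (Fin d), ‖s‖ = 1 →
      ‖(A (x₀ + r • s) : ℂ)
            * Complex.exp (Complex.I * (ω : ℂ) * (φ (x₀ + r • s) : ℂ))
          - (A x₀ : ℂ)
            * Complex.exp (Complex.I * (ω : ℂ)
                * ((φ x₀ + r * ⟪gradient φ x₀, s⟫_ℝ : ℝ) : ℂ))‖
        ≤ r * C₁ + ω * r ^ 2 / 2 * |A x₀| * C₃ :=
  stmt_13_general x₀ r hr A φ hA hφ C₁ C₃ hC₁ hC₃
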